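/- Let τ be a Hausdorff topology on 𝓘↗∞(ℤ) such that the multiplication is separately continuous (for every α, both the left translation χ ↦ α·χ and the right translation χ ↦ χ·α are continuous) and such that (𝓘↗∞(ℤ), τ) is a Baire space. Then τ is the discrete topology. -/

import Mathlib

/-- A monotone injective partial self-map of `ℤ` with cofinite domain and cofinite range,
encoded as a function `ℤ → Option ℤ` where `none` means "undefined". -/
structure IsMIP (f : ℤ → Option ℤ) : Prop where
  inj : ∀ ⦃x y a : ℤ⦄, f x = some a → f y = some a → x = y
  mono : ∀ ⦃x y a b : ℤ⦄, f x = some a → f y = some b → x ≤ y → a ≤ b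
  cofin_dom : {x : ℤ | f x = none}.Finite
  cofin_ran : {y : ℤ | ∀ x : ℤ, f x ≠ some y}.Finite

/-- The monoid `𝓘↗∞(ℤ)` of monotone injective partial self-maps of `ℤ`
with cofinite domain and cofinite range. -/
def IZ : Type := {f : ℤ → Option ℤ // IsMIP f}

namespace IZ

/-- Composition of partial maps, written left-to-right: `(pcomp f g) x = g (f x)`. -/
def pcomp (f g : ℤ → Option ℤ) : ℤ → Option ℤ := fun x => (f x).bind g

theorem isMIP_id : IsMIP (fun x : ℤ => some x) := by
  refine ⟨?_, ?_, ?_, ?_⟩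
  · intro x y a hx hy; simp_all
  · intro x y a b hx hy h; simp_all
  · simp
  · have : {y : ℤ | ∀ x : ℤ, (fun x : ℤ => some x) x ≠ some y} = ∅ := by
      ext y; simp
    rw [this]; exact Set.finite_empty

theorem isMIP_comp {f g : ℤ → Option ℤ} (hf : IsMIP f) (hg : IsMIP g) :
    IsMIP (pcomp f g) := by
  refine ⟨?_, ?_, ?_, ?_⟩
  · intro x y a hx hy
    rw [pcomp, Option.bind_eq_some_iff] at hx hy
    obtain ⟨b, hb, hba⟩ := hx
    obtain ⟨c, hc, hca⟩ := hy
    have hbc : b = c := hg.inj hba hca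
    subst hbc
    exact hf.inj hb hc
  · intro x y a b hx hy hxy
    rw [pcomp, Option.bind_eq_some_iff] at hx hy
    obtain ⟨p, hp, hpa⟩ := hx
    obtain ⟨q, hq, hqb⟩ := hy
    exact hg.mono hpa hqb (hf.mono hp hq hxy)
  · have hsub : {x : ℤ | pcomp f g x = none} ⊆
        {x : ℤ | f x = none} ∪ f ⁻¹' (Option.some '' {a : ℤ | g a = none}) := by
      intro x hx
      simp only [Set.mem_setOf_eq, pcomp] at hx
      cases hfx : f x with
      | none => exact Or.inl hfx
      | some a =>
        right
        rw [hfx] at hx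
        simp only [Option.bind_some] at hx
        exact ⟨a, hx, hfx.symm⟩
    refine Set.Finite.subset (Set.Finite.union hf.cofin_dom ?_) hsub
    refine Set.Finite.preimage ?_ (hg.cofin_dom.image _)
    intro x hx y hy hxy
    obtain ⟨a, _, ha⟩ := hx
    obtain ⟨b, _, hb⟩ := hy
    have hfa : f x = some a := ha.symm
    have hfb : f y = some b := hb.symm
    have : some a = some b := by rw [← hfa, ← hfb, hxy]
    rw [Option.some_inj] at this
    subst this
    exact hf.inj hfa hfb
  · have hsub : {y : ℤ | ∀ x : ℤ, pcomp f g x ≠ some y} ⊆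
        {y : ℤ | ∀ x : ℤ, g x ≠ some y} ∪
          ((fun a => (g a).getD 0) '' {a : ℤ | ∀ x : ℤ, f x ≠ some a}) := by
      intro y hy
      simp only [Set.mem_setOf_eq] at hy
      by_cases hgy : ∀ a : ℤ, g a ≠ some y
      · exact Or.inl hgy
      · push_neg at hgy
        obtain ⟨a, hga⟩ := hgy
        right
        refine ⟨a, ?_, by simp [hga]⟩
        intro x hfx
        exact hy x (by simp [pcomp, hfx, hga])
    exact Set.Finite.subset (Set.Finite.union hg.cofin_ran (hf.cofin_ran.image _)) hsub

instance : Monoid IZ where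
  one := ⟨fun x => some x, isMIP_id⟩
  mul a b := ⟨pcomp a.1 b.1, isMIP_comp a.2 b.2⟩
  mul_assoc a b c := by
    apply Subtype.ext
    funext x
    exact Option.bind_assoc (a.1 x) b.1 c.1
  one_mul a := by
    apply Subtype.ext
    funext x
    rfl
  mul_one a := by
    apply Subtype.ext
    funext x
    show (a.1 x).bind some = a.1 x
    cases a.1 x <;> rfl

theorem mul_def (a b : IZ) : (a * b).1 = pcomp a.1 b.1 := rfl

theorem one_def : (1 : IZ).1 = fun x : ℤ => some x := rfl

/-- The domain of an element of `𝓘↗∞(ℤ)`. -/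
def dom (a : IZ) : Set ℤ := {x : ℤ | a.1 x ≠ none}

/-- The range of an element of `𝓘↗∞(ℤ)`. -/
def ran (a : IZ) : Set ℤ := {y : ℤ | ∃ x : ℤ, a.1 x = some y}

end IZ

/-!
Every element of `𝓘↗∞(ℤ)` is a translation outside a finite window, so the monoid is countable
and a Baire T₁ topology on it has an isolated point `c`. Monotonicity traps the values of a map
that agrees with a fixed `a` on a cofinite part of `dom a`, so only finitely many maps do. Hence
`{b | b * c = c}` is a finite open neighbourhood of `1`, and `1` is isolated. Finally, every `a`
satisfies `u * a * v = 1` for suitable `u, v`, where every solution `b` of `u * b * v = 1` agrees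
with `a` on `dom a`; this finite set is open by separate continuity, so `a` is isolated.
-/

theorem Set.Finite.exists_abs_lt_natCast {s : Set ℤ} (hs : s.Finite) :
    ∃ n : ℕ, ∀ x ∈ s, |x| < n := by
  obtain ⟨M, hM⟩ := (hs.image abs).bddAbove
  refine ⟨M.toNat + 1, fun x hx => ?_⟩
  have := hM (Set.mem_image_of_mem abs hx)
  have := Int.self_le_toNat M
  push_cast
  omega

theorem BaireSpace.exists_isOpen_singleton_of_countable (X : Type*) [TopologicalSpace X]
    [T1Space X] [BaireSpace X] [Countable X] [Nonempty X] : ∃ x : X, IsOpen {x} := by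
  obtain ⟨x, hx⟩ := nonempty_interior_of_iUnion_of_closed (fun x : X => isClosed_singleton)
    (Set.iUnion_of_singleton X)
  refine ⟨x, ?_⟩
  rw [← (Set.subset_singleton_iff_eq.1 interior_subset).resolve_left hx.ne_empty]
  exact isOpen_interior

namespace IZ

theorem mul_apply (a b : IZ) (x : ℤ) : (a * b).1 x = (a.1 x).bind b.1 := rfl

theorem apply_eq_of_eq {a b : IZ} (h : a = b) (x : ℤ) : a.1 x = b.1 x := by rw [h]

theorem mem_dom_iff {a : IZ} {x : ℤ} : x ∈ a.dom ↔ ∃ y, a.1 x = some y :=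
  Option.ne_none_iff_exists'

theorem finite_compl_dom (a : IZ) : a.domᶜ.Finite :=
  a.2.cofin_dom.subset fun _ hx => not_not.1 hx

theorem finite_compl_ran (a : IZ) : a.ranᶜ.Finite :=
  a.2.cofin_ran.subset fun _ hy x hx => hy ⟨x, hx⟩

theorem lt_of_apply_eq_some {a : IZ} {x y c d : ℤ} (hx : a.1 x = some c) (hy : a.1 y = some d)
    (hxy : x < y) : c < d :=
  (a.2.mono hx hy hxy.le).lt_of_ne fun h => hxy.ne (a.2.inj hx (h ▸ hy))

theorem dom_mul_eq_univ {a b : IZ} (ha : a.dom = Set.univ) (hab : a.ran ⊆ b.dom) :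
    (a * b).dom = Set.univ := by
  refine Set.eq_univ_of_forall fun x => ?_
  obtain ⟨y, hy⟩ := mem_dom_iff.1 (ha ▸ Set.mem_univ x)
  obtain ⟨z, hz⟩ := mem_dom_iff.1 (hab ⟨x, hy⟩)
  exact mem_dom_iff.2 ⟨z, by rw [mul_apply, hy, Option.bind_some, hz]⟩

theorem mem_ran_mul {a b : IZ} {y : ℤ} : y ∈ (a * b).ran ↔ ∃ z ∈ a.ran, b.1 z = some y := by
  simp only [ran, mul_apply, Option.bind_eq_some_iff, Set.mem_ofPred_eq]
  grind

def StepsByOne (a : IZ) (x : ℤ) : Prop := ∃ c, a.1 x = some c ∧ a.1 (x + 1) = some (c + 1)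

theorem finite_setOf_not_stepsByOne (a : IZ) : {x | ¬ a.StepsByOne x}.Finite := by
  have hgap : {x | ∃ c, a.1 x = some c ∧ c + 1 ∉ a.ran}.Finite := by
    refine Set.Finite.subset (s := ⋃ r ∈ a.ranᶜ, {x | a.1 x = some (r - 1)})
      (a.finite_compl_ran.biUnion fun r _ => ?_) fun x ⟨c, hc, hr⟩ => ?_
    · exact Set.Subsingleton.finite fun x hx y hy => a.2.inj hx hy
    · exact Set.mem_biUnion hr (by simpa using hc)
  have hnext : {x | a.1 (x + 1) = none}.Finite :=
    a.2.cofin_dom.preimage (add_left_injective 1).injOn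
  refine ((a.2.cofin_dom.union hnext).union hgap).subset fun x hx => ?_
  cases hx0 : a.1 x with
  | none => exact .inl (.inl hx0)
  | some c =>
    cases hx1 : a.1 (x + 1) with
    | none => exact .inl (.inr hx1)
    | some d =>
      -- unless `d = c + 1`, a preimage of `c + 1` would lie strictly between `x` and `x + 1`
      refine .inr ⟨c, hx0, fun ⟨z, hz⟩ => hx ⟨c, hx0, ?_⟩⟩
      rcases le_or_gt z x with hzx | hzx
      · exact absurd (a.2.mono hz hx0 hzx) (by omega)
      · have hcd := a.2.mono hx1 hz (by omega)
        have := lt_of_apply_eq_some hx0 hx1 (lt_add_one x)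
        rw [hx1, show d = c + 1 by omega]

theorem exists_forall_le_abs_stepsByOne (a : IZ) :
    ∃ n : ℕ, ∀ x : ℤ, (n : ℤ) ≤ |x| → a.StepsByOne x := by
  obtain ⟨n, hn⟩ := a.finite_setOf_not_stepsByOne.exists_abs_lt_natCast
  exact ⟨n, fun x hx => by_contra fun h => (hn x h).not_ge hx⟩

theorem eq_of_eqOn_Icc {a b : IZ} {n : ℕ} (ha : ∀ x : ℤ, (n : ℤ) ≤ |x| → a.StepsByOne x)
    (hb : ∀ x : ℤ, (n : ℤ) ≤ |x| → b.StepsByOne x) (h : (Set.Icc (-(n : ℤ)) n).EqOn a.1 b.1) :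
    a = b := by
  have step : ∀ x : ℤ, (n : ℤ) ≤ |x| → (a.1 x = b.1 x ↔ a.1 (x + 1) = b.1 (x + 1)) := by
    intro x hx
    obtain ⟨c, hc, hc1⟩ := ha x hx
    obtain ⟨d, hd, hd1⟩ := hb x hx
    simp [hc, hc1, hd, hd1]
  have up : ∀ x : ℤ, (n : ℤ) ≤ x → a.1 x = b.1 x := by
    intro x hx
    induction x, hx using Int.leInduction with
    | base => exact h ⟨by omega, le_rfl⟩
    | succ x hx ih => exact (step x (le_abs.2 (.inl hx))).1 ih
  have down : ∀ x : ℤ, x ≤ -(n : ℤ) → a.1 x = b.1 x := by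
    intro x hx
    induction x, hx using Int.leInductionDown with
    | base => exact h ⟨le_rfl, by omega⟩
    | pred x hx ih =>
      exact (step (x - 1) (le_abs.2 (.inr (by omega)))).2 (by rwa [sub_add_cancel])
  apply Subtype.ext
  funext x
  rcases le_or_gt (n : ℤ) x with hnx | hxn
  · exact up x hnx
  rcases le_or_gt x (-(n : ℤ)) with hxn' | hnx'
  · exact down x hxn'
  exact h ⟨hnx'.le, hxn.le⟩

instance : Countable IZ := by
  have hcover : ⋃ n : ℕ, {a : IZ | ∀ x : ℤ, (n : ℤ) ≤ |x| → a.StepsByOne x} = Set.univ :=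
    Set.eq_univ_of_forall fun a => Set.mem_iUnion.2 a.exists_forall_le_abs_stepsByOne
  refine Set.countable_univ_iff.1 (hcover ▸ Set.countable_iUnion fun n => ?_)
  refine Set.MapsTo.countable_of_injOn (f := fun a (x : Set.Icc (-(n : ℤ)) n) => a.1 x)
    (Set.mapsTo_univ _ _) ?_ Set.countable_univ
  exact fun a ha b hb h => eq_of_eqOn_Icc ha hb fun x hx => congrFun h ⟨x, hx⟩

theorem finite_setOf_eqOn {a : IZ} {S : Set ℤ} (hS : Sᶜ.Finite) (hSa : S ⊆ a.dom) :
    {b : IZ | S.EqOn b.1 a.1}.Finite := by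
  obtain ⟨m, hm⟩ := hS.exists_abs_lt_natCast
  have hmem : ∀ y : ℤ, (m : ℤ) ≤ |y| → y ∈ S := fun y hy => by_contra fun h => (hm y h).not_ge hy
  obtain ⟨p, hp⟩ := mem_dom_iff.1 (hSa (hmem (-m) (by simp)))
  obtain ⟨q, hq⟩ := mem_dom_iff.1 (hSa (hmem m (by simp)))
  have : Finite ↥Sᶜ := hS.to_subtype
  -- `Sᶜ` lies strictly between `-m` and `m`, so off `S` each `b` is undefined or lands in `[p, q]`
  refine Set.Finite.of_injOn (f := fun b (y : ↥Sᶜ) => b.1 y)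
    (t := Set.pi Set.univ fun _ => insert none (some '' Set.Icc p q)) ?_ ?_
    (Set.Finite.pi fun _ => ((Set.finite_Icc p q).image some).insert none)
  · intro b hb y _
    change b.1 y ∈ insert none (some '' Set.Icc p q)
    cases hy : b.1 y with
    | none => exact Set.mem_insert _ _
    | some z =>
      have hym := abs_lt.1 (hm y y.2)
      refine Set.mem_insert_of_mem _ ⟨z, ⟨?_, ?_⟩, rfl⟩
      · exact b.2.mono ((hb (hmem (-m) (by simp))).trans hp) hy (by omega)
      · exact b.2.mono hy ((hb (hmem m (by simp))).trans hq) (by omega)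
  · intro b hb b' hb' h
    apply Subtype.ext
    funext y
    by_cases hy : y ∈ S
    · exact (hb hy).trans (hb' hy).symm
    · exact congrFun h ⟨y, hy⟩

theorem finite_setOf_mul_eq_right (c : IZ) : {b : IZ | b * c = c}.Finite := by
  refine (finite_setOf_eqOn (a := 1) c.finite_compl_dom fun y _ => mem_dom_iff.2 ⟨y, rfl⟩).subset
    fun b hb y hy => ?_
  obtain ⟨z, hz⟩ := mem_dom_iff.1 hy
  obtain ⟨w, hw, hwz⟩ := Option.bind_eq_some_iff.1 ((apply_eq_of_eq hb y).trans hz)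
  rw [hw, c.2.inj hwz hz]
  rfl

def skip (j : ℤ) : IZ :=
  ⟨fun x => some (if x < j then x else x + 1), by
    refine ⟨fun x y c hx hy => ?_, fun x y c d hx hy hxy => ?_, by simp, ?_⟩
    · simp only [Option.some.injEq] at hx hy
      split_ifs at hx hy <;> omega
    · simp only [Option.some.injEq] at hx hy
      split_ifs at hx hy <;> omega
    · refine (Set.finite_singleton j).subset fun y hy => ?_
      by_contra hne
      rcases lt_or_gt_of_ne hne with h | h
      · exact hy y (by simp [h])
      · exact hy (y - 1) (by simp only [Option.some.injEq]; split_ifs <;> omega)⟩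

theorem dom_skip (j : ℤ) : (skip j).dom = Set.univ :=
  Set.eq_univ_of_forall fun _ => Option.some_ne_none _

theorem mem_ran_skip {j y : ℤ} : y ∈ (skip j).ran ↔ y ≠ j := by
  refine ⟨fun ⟨x, hx⟩ => ?_, fun hy => ?_⟩
  · simp only [skip, Option.some.injEq] at hx
    split_ifs at hx <;> omega
  · refine ⟨if y < j then y else y - 1, ?_⟩
    simp only [skip, Option.some.injEq]
    split_ifs <;> omega

theorem exists_dom_eq_univ_ran_eq_compl {D : Set ℤ} (hD : D.Finite) :
    ∃ u : IZ, u.dom = Set.univ ∧ u.ran = Dᶜ := by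
  induction D, hD using Set.Finite.induction_on with
  | empty =>
    refine ⟨1, Set.eq_univ_of_forall fun x => mem_dom_iff.2 ⟨x, rfl⟩, ?_⟩
    rw [Set.compl_empty]
    exact Set.eq_univ_of_forall fun y => ⟨y, rfl⟩
  | @insert k D hk _ ih =>
    obtain ⟨u, hu_dom, hu_ran⟩ := ih
    obtain ⟨j, hj⟩ : k ∈ u.ran := hu_ran ▸ hk
    refine ⟨skip j * u, dom_mul_eq_univ (dom_skip j) (hu_dom ▸ Set.subset_univ _),
      Set.ext fun y => ?_⟩
    have hyD : y ∉ D ↔ y ∈ u.ran := by rw [hu_ran]; rfl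
    simp only [mem_ran_mul, mem_ran_skip, Set.mem_compl_iff, Set.mem_insert_iff, not_or, hyD]
    constructor
    · rintro ⟨z, hzj, hzy⟩
      exact ⟨fun hyk => hzj (u.2.inj hzy (hyk ▸ hj)), z, hzy⟩
    · rintro ⟨hyk, z, hzy⟩
      exact ⟨z, fun hzj => hyk (Option.some.inj (hzy.symm.trans (hzj ▸ hj))), hzy⟩

theorem partialInv_eq_some_iff (a : IZ) {x y : ℤ} :
    Function.partialInv a.1 (some y) = some x ↔ a.1 x = some y := by
  unfold Function.partialInv
  split_ifs with h
  · exact ⟨fun hx => Option.some.inj hx ▸ h.choose_spec,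
      fun hx => congrArg some (a.2.inj h.choose_spec hx)⟩
  · exact ⟨fun hx => (nomatch hx), fun hx => absurd ⟨x, hx⟩ h⟩

noncomputable def symm (a : IZ) : IZ :=
  ⟨fun y => Function.partialInv a.1 (some y), by
    refine ⟨fun y y' x hy hy' => ?_, fun y y' x x' hy hy' hyy' => ?_, ?_, ?_⟩
    · rw [partialInv_eq_some_iff] at hy hy'
      exact Option.some.inj (hy.symm.trans hy')
    · rw [partialInv_eq_some_iff] at hy hy'
      by_contra! hx
      exact (lt_of_apply_eq_some hy' hy hx).not_ge hyy'
    · refine a.finite_compl_ran.subset fun y hy ⟨x, hx⟩ => ?_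
      simp [((partialInv_eq_some_iff a).2 hx)] at hy
    · refine a.finite_compl_dom.subset fun x hx hxd => ?_
      obtain ⟨y, hy⟩ := mem_dom_iff.1 hxd
      exact hx y ((partialInv_eq_some_iff a).2 hy)⟩

theorem exists_mul_mul_eq_one (a : IZ) :
    ∃ u v : IZ, u * a * v = 1 ∧ {b : IZ | u * b * v = 1}.Finite := by
  obtain ⟨u, hu_dom, hu_ran⟩ := exists_dom_eq_univ_ran_eq_compl a.finite_compl_dom
  rw [compl_compl] at hu_ran
  have hua : (u * a).dom = Set.univ := dom_mul_eq_univ hu_dom hu_ran.le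
  refine ⟨u, (u * a).symm, ?_, (finite_setOf_eqOn a.finite_compl_dom le_rfl).subset
    fun b hb y hy => ?_⟩
  · apply Subtype.ext
    funext x
    obtain ⟨z, hz⟩ := mem_dom_iff.1 (hua ▸ Set.mem_univ x)
    rw [mul_apply, hz, Option.bind_some]
    exact (partialInv_eq_some_iff _).2 hz
  · -- writing `y = u x`, the equation `(u * b * v) x = x` forces `b y = (u * a) x = a y`
    obtain ⟨x, hx⟩ : y ∈ u.ran := hu_ran ▸ hy
    have hbx := apply_eq_of_eq hb x
    rw [mul_apply, mul_apply, hx, Option.bind_some] at hbx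
    obtain ⟨z, hz, hzx⟩ := Option.bind_eq_some_iff.1 hbx
    have hax := (partialInv_eq_some_iff _).1 hzx
    rw [mul_apply, hx, Option.bind_some] at hax
    rw [hz, hax]

end IZ

/-- Every Hausdorff Baire topology on `𝓘↗∞(ℤ)` with separately continuous
multiplication (a semitopological semigroup) is the discrete topology. -/
theorem statement17 (τ : TopologicalSpace IZ) (h2 : @T2Space IZ τ)
    (hl : ∀ a : IZ, @Continuous IZ IZ τ τ (fun x => a * x))
    (hr : ∀ a : IZ, @Continuous IZ IZ τ τ (fun x => x * a))
    (hb : @BaireSpace IZ τ) :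
    @DiscreteTopology IZ τ := by
  have : Nonempty IZ := ⟨1⟩
  obtain ⟨c, hc⟩ := BaireSpace.exists_isOpen_singleton_of_countable IZ
  have h1 : IsOpen ({1} : Set IZ) := isOpen_singleton_of_finite_mem_nhds 1
    ((hc.preimage (hr c)).mem_nhds (one_mul c)) c.finite_setOf_mul_eq_right
  refine discreteTopology_iff_isOpen_singleton.2 fun a => ?_
  obtain ⟨u, v, huav, hfin⟩ := a.exists_mul_mul_eq_one
  exact isOpen_singleton_of_finite_mem_nhds a
    ((h1.preimage ((hr v).comp (hl u))).mem_nhds huav) hfin
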